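/- Let n, rₙ ∈ ℕ, let p be a probability vector on {1,…,n}, and let Z ~ Multinomial(n·rₙ, p). Then for any μ > 0, P[D(Z/(n·rₙ) ‖ p) ≥ (Δ(rₙ)+μ)/rₙ] ≤ √(2πe·n·rₙ)·e^{−nμ}, where D is the KL divergence and Δ(r) = inf_{q>2}{(1−1/q)Ψ(r) + (1/q)log[1 + (2π)^{−q/2}ζ(q/2)]} with Ψ(t) = (1+t)log(1+t) − t·log t. -/

import Mathlib

open Real

/-- `Ψ(t) = (1+t)log(1+t) − t·log t`. -/
noncomputable def Psi (t : ℝ) : ℝ := (1 + t) * Real.log (1 + t) - t * Real.log t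

/-- Riemann's zeta function for real arguments, `ζ(s) = ∑_{j=1}^∞ j^{-s}`. -/
noncomputable def zetaReal (s : ℝ) : ℝ := ∑' j : ℕ, ((j : ℝ) + 1) ^ (-s)

/-- `Δ(r) = inf_{q>2} {(1−1/q)·Ψ(r) + (1/q)·log[1 + (2π)^{−q/2}ζ(q/2)]}`. -/
noncomputable def Delta (r : ℝ) : ℝ :=
  sInf {x : ℝ | ∃ q : ℝ, 2 < q ∧
    x = (1 - 1/q) * Psi r + (1/q) * Real.log (1 + (2 * π) ^ (-q/2) * zetaReal (q/2))}

/-!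
The multinomial probability of `z` (with `∑ zᵢ = N = n r`) factors as `exp (-N D(z/N ‖ p))`
times `N!/∏ zᵢ! · ∏ (zᵢ/N)^zᵢ`. By Stirling's bounds the second factor is at most
`e √N ∏ w(zᵢ)`, where `w(m) = (m/e)^m / m!` is the Poisson(m) mass at `m` and
`w(m) ≤ (2πm)^(-1/2)`. On the event `D ≥ (Δ(r) + μ)/r` the first factor is at most
`exp (-n (Δ(r) + μ))`, so it remains to show `∑_{∑ zᵢ = N} ∏ w(zᵢ) ≤ exp (n Δ(r))`.
Tilting by `u^zᵢ` bounds this sum by `u^(-N) (∑ₘ w(m) uᵐ)ⁿ`. With `u = (r/(1+r))^(1-1/q)`,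
Hölder's inequality for the exponents `q/(q-1)` and `q` bounds `∑ₘ w(m) uᵐ` by
`(1+r)^(1-1/q) (1 + (2π)^(-q/2) ζ(q/2))^(1/q)`, and the powers of `r/(1+r)` and `1+r` combine
into `exp ((1-1/q) n Ψ(r))`. Taking the infimum over `q > 2` gives `Δ(r)`.
-/

open Finset
open scoped Nat

theorem factorial_le_exp_one_mul_sqrt_mul {n : ℕ} (hn : n ≠ 0) :
    (n ! : ℝ) ≤ exp 1 * √n * (n / exp 1) ^ n := by
  have hseq : Stirling.stirlingSeq n ≤ exp 1 / √2 := by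
    obtain ⟨k, rfl⟩ := Nat.exists_eq_succ_of_ne_zero hn
    rw [← Stirling.stirlingSeq_one]
    exact Stirling.stirlingSeq'_antitone (Nat.zero_le k)
  rw [Stirling.stirlingSeq, div_le_iff₀ (by positivity)] at hseq
  calc (n ! : ℝ) ≤ exp 1 / √2 * (√(2 * n) * (n / exp 1) ^ n) := hseq
    _ = exp 1 * √n * (n / exp 1) ^ n := by
      rw [Real.sqrt_mul zero_le_two]
      field_simp

noncomputable def poissonMassAtMean (m : ℕ) : ℝ := (m / exp 1) ^ m / m !

lemma poissonMassAtMean_nonneg (m : ℕ) : 0 ≤ poissonMassAtMean m := by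
  unfold poissonMassAtMean; positivity

lemma poissonMassAtMean_zero : poissonMassAtMean 0 = 1 := by simp [poissonMassAtMean]

lemma poissonMassAtMean_le {m : ℕ} (hm : m ≠ 0) :
    poissonMassAtMean m ≤ (√(2 * π * m))⁻¹ := by
  have : (0 : ℝ) < √(2 * π * m) := by positivity
  rw [poissonMassAtMean, div_le_iff₀ (by positivity), ← div_eq_inv_mul, le_div_iff₀ this,
    mul_comm]
  exact Stirling.le_factorial_stirling m

lemma inv_poissonMassAtMean_le {m : ℕ} (hm : m ≠ 0) :
    (poissonMassAtMean m)⁻¹ ≤ exp 1 * √m := by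
  have : (0 : ℝ) < (m / exp 1) ^ m := by positivity
  rw [poissonMassAtMean, inv_div, div_le_iff₀ this]
  exact factorial_le_exp_one_mul_sqrt_mul hm

lemma pow_eq_exp_neg_mul_log_mul_pow {x c : ℝ} (hx : 0 < x) (hc : 0 < c) (k : ℕ) :
    x ^ k = exp (-(k * log ((k / c) / x))) * (k / c) ^ k := by
  rcases Nat.eq_zero_or_pos k with rfl | hk
  · simp
  have hkc : (0 : ℝ) < k / c := by positivity
  rw [log_div hkc.ne' hx.ne', neg_mul_eq_mul_neg, neg_sub, mul_sub, exp_sub, exp_nat_mul,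
    exp_nat_mul, exp_log hx, exp_log hkc, div_mul_cancel₀ _ (by positivity)]

section Multinomial

variable {ι : Type*} [Fintype ι]

lemma prod_pow_eq_exp_neg_mul_klDiv_mul {N : ℕ} (hN : N ≠ 0) (z : ι → ℕ) {p : ι → ℝ}
    (hp : ∀ i, 0 < p i) :
    ∏ i, p i ^ z i = exp (-(N * ∑ i, (z i / N : ℝ) * log ((z i / N : ℝ) / p i))) *
      ∏ i, (z i / N : ℝ) ^ z i := by
  have hN' : (0 : ℝ) < N := by positivity
  have hsum : (N : ℝ) * ∑ i, (z i / N : ℝ) * log ((z i / N : ℝ) / p i) =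
      ∑ i, z i * log ((z i / N : ℝ) / p i) := by
    rw [mul_sum]
    refine sum_congr rfl fun i _ => ?_
    field_simp
  rw [hsum, ← sum_neg_distrib, exp_sum, ← prod_mul_distrib]
  exact prod_congr rfl fun i _ => pow_eq_exp_neg_mul_log_mul_pow (hp i) hN' (z i)

lemma multinomial_mul_prod_pow_eq {N : ℕ} (hN : N ≠ 0) {z : ι → ℕ} (hz : ∑ i, z i = N) :
    ((N ! : ℝ) / ∏ i, ((z i)! : ℝ)) * ∏ i, (z i / N : ℝ) ^ z i =
      (∏ i, poissonMassAtMean (z i)) / poissonMassAtMean N := by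
  have hpow (c : ℝ) : ∏ i, (z i / c) ^ z i = (∏ i, (z i : ℝ) ^ z i) / c ^ N := by
    simp only [div_pow, prod_div_distrib, prod_pow_eq_pow_sum, hz]
  have hw : ∏ i, poissonMassAtMean (z i) =
      (∏ i, (z i : ℝ) ^ z i) / exp 1 ^ N / ∏ i, ((z i)! : ℝ) := by
    simp only [poissonMassAtMean, prod_div_distrib, hpow]
  rw [hw, hpow, poissonMassAtMean, div_pow]
  field_simp

lemma multinomial_le_of_le_klDiv {N : ℕ} (hN : N ≠ 0) {z : ι → ℕ} (hz : ∑ i, z i = N)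
    {p : ι → ℝ} (hp : ∀ i, 0 < p i) {t : ℝ}
    (ht : t ≤ ∑ i, (z i / N : ℝ) * log ((z i / N : ℝ) / p i)) :
    ((N ! : ℝ) / ∏ i, ((z i)! : ℝ)) * ∏ i, p i ^ z i ≤
      exp (-(N * t)) * (exp 1 * √N) * ∏ i, poissonMassAtMean (z i) := by
  calc ((N ! : ℝ) / ∏ i, ((z i)! : ℝ)) * ∏ i, p i ^ z i
      = exp (-(N * ∑ i, (z i / N : ℝ) * log ((z i / N : ℝ) / p i))) *
          (poissonMassAtMean N)⁻¹ * ∏ i, poissonMassAtMean (z i) := by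
        rw [prod_pow_eq_exp_neg_mul_klDiv_mul hN z hp, mul_left_comm,
          multinomial_mul_prod_pow_eq hN hz]
        ring
    _ ≤ exp (-(N * t)) * (exp 1 * √N) * ∏ i, poissonMassAtMean (z i) := by
        gcongr
        · exact prod_nonneg fun i _ => poissonMassAtMean_nonneg _
        · exact inv_nonneg.2 (poissonMassAtMean_nonneg N)
        · exact inv_poissonMassAtMean_le hN

end Multinomial

lemma sum_antidiagonalTuple_prod_le {f : ℕ → ℝ} (hf : ∀ m, 0 ≤ f m) {u : ℝ} (hu : 0 < u)
    (n N : ℕ) :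
    ∑ z ∈ Nat.antidiagonalTuple n N, ∏ i, f (z i) ≤
      (∑ m ∈ range (N + 1), f m * u ^ m) ^ n / u ^ N := by
  have hsub : Nat.antidiagonalTuple n N ⊆ Fintype.piFinset fun _ => range (N + 1) := by
    intro z hz
    rw [Nat.mem_antidiagonalTuple] at hz
    rw [Fintype.mem_piFinset]
    intro i
    rw [mem_range, Nat.lt_succ_iff, ← hz]
    exact single_le_sum (fun j _ => Nat.zero_le (z j)) (mem_univ i)
  rw [le_div_iff₀ (by positivity), sum_mul]
  calc ∑ z ∈ Nat.antidiagonalTuple n N, (∏ i, f (z i)) * u ^ N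
      = ∑ z ∈ Nat.antidiagonalTuple n N, ∏ i, f (z i) * u ^ z i := by
        refine sum_congr rfl fun z hz => ?_
        rw [prod_mul_distrib, prod_pow_eq_pow_sum, (Nat.mem_antidiagonalTuple).1 hz]
    _ ≤ ∑ z ∈ Fintype.piFinset fun _ => range (N + 1), ∏ i, f (z i) * u ^ z i :=
        sum_le_sum_of_subset_of_nonneg hsub fun z _ _ =>
          prod_nonneg fun i _ => mul_nonneg (hf _) (by positivity)
    _ = ∏ _i : Fin n, ∑ m ∈ range (N + 1), f m * u ^ m :=
        (prod_univ_sum (fun _ => range (N + 1)) fun _ m => f m * u ^ m).symm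
    _ = (∑ m ∈ range (N + 1), f m * u ^ m) ^ n := Fin.prod_const n _

lemma sum_mul_rpow_pow_le {p q x : ℝ} (hpq : p.HolderConjugate q) (hx0 : 0 ≤ x) (hx1 : x < 1)
    {f : ℕ → ℝ} (hf : ∀ m, 0 ≤ f m) (M : ℕ) :
    ∑ m ∈ range M, f m * (x ^ p⁻¹) ^ m ≤
      (1 - x)⁻¹ ^ p⁻¹ * (∑ m ∈ range M, f m ^ q) ^ q⁻¹ := by
  have hgeom : ∑ m ∈ range M, ((x ^ p⁻¹) ^ m) ^ p = ∑ m ∈ range M, x ^ m := by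
    refine sum_congr rfl fun m _ => ?_
    rw [← rpow_natCast, ← rpow_mul (by positivity), ← rpow_mul hx0,
      show p⁻¹ * (m * p) = m by field_simp [hpq.ne_zero], rpow_natCast]
  calc ∑ m ∈ range M, f m * (x ^ p⁻¹) ^ m = ∑ m ∈ range M, (x ^ p⁻¹) ^ m * f m := by
        simp only [mul_comm]
    _ ≤ (∑ m ∈ range M, ((x ^ p⁻¹) ^ m) ^ p) ^ (1 / p) *
          (∑ m ∈ range M, f m ^ q) ^ (1 / q) :=
        inner_le_Lp_mul_Lq_of_nonneg (range M) hpq (fun m _ => by positivity) fun m _ => hf m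
    _ ≤ (1 - x)⁻¹ ^ p⁻¹ * (∑ m ∈ range M, f m ^ q) ^ q⁻¹ := by
        rw [hgeom, one_div, one_div]
        have := hpq.inv_nonneg
        gcongr
        · exact rpow_nonneg (sum_nonneg fun m _ => rpow_nonneg (hf m) q) _
        simpa using geom_sum_Ico_le_of_lt_one (m := 0) (n := M) hx0 hx1

lemma sum_range_succ_poissonMassAtMean_rpow_le {q : ℝ} (hq : 2 < q) (M : ℕ) :
    ∑ m ∈ range (M + 1), poissonMassAtMean m ^ q ≤
      1 + (2 * π) ^ (-q/2) * zetaReal (q/2) := by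
  have hsummable : Summable fun j : ℕ => ((j : ℝ) + 1) ^ (-(q/2)) := by
    simpa using (summable_nat_add_iff 1).2 (summable_nat_rpow.2 (by linarith : -(q/2) < -1))
  have hterm (j : ℕ) :
      poissonMassAtMean (j + 1) ^ q ≤ (2 * π) ^ (-q/2) * ((j : ℝ) + 1) ^ (-(q/2)) := by
    calc poissonMassAtMean (j + 1) ^ q ≤ (√(2 * π * (j + 1 : ℕ)))⁻¹ ^ q :=
          rpow_le_rpow (poissonMassAtMean_nonneg _) (poissonMassAtMean_le j.succ_ne_zero)
            (by linarith)
      _ = (2 * π) ^ (-q/2) * ((j : ℝ) + 1) ^ (-(q/2)) := by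
          rw [sqrt_eq_rpow, ← rpow_neg (by positivity), ← rpow_mul (by positivity),
            Nat.cast_succ, mul_rpow (by positivity) (by positivity)]
          ring_nf
  rw [sum_range_succ', poissonMassAtMean_zero, one_rpow, add_comm]
  gcongr
  calc ∑ j ∈ range M, poissonMassAtMean (j + 1) ^ q
      ≤ ∑ j ∈ range M, (2 * π) ^ (-q/2) * ((j : ℝ) + 1) ^ (-(q/2)) :=
        sum_le_sum fun j _ => hterm j
    _ = (2 * π) ^ (-q/2) * ∑ j ∈ range M, ((j : ℝ) + 1) ^ (-(q/2)) := (mul_sum _ _ _).symm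
    _ ≤ (2 * π) ^ (-q/2) * zetaReal (q/2) := by
        gcongr
        exact hsummable.sum_le_tsum _ fun j _ => by positivity

lemma le_exp_mul_sInf {T : Set ℝ} (hT : T.Nonempty) {a S : ℝ} (ha : 0 < a)
    (h : ∀ t ∈ T, S ≤ exp (a * t)) : S ≤ exp (a * sInf T) := by
  rcases le_or_gt S 0 with hS | hS
  · exact hS.trans (exp_pos _).le
  rw [← log_le_iff_le_exp hS, ← div_le_iff₀' ha]
  refine le_csInf hT fun t ht => ?_
  rw [div_le_iff₀' ha, log_le_iff_le_exp hS]
  exact h t ht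

lemma rpow_div_rpow_eq_exp_mul_Psi {r : ℝ} (hr : 0 < r) (s : ℝ) :
    (1 + r) ^ s / (r / (1 + r)) ^ (s * r) = exp (s * Psi r) := by
  rw [rpow_def_of_pos (by positivity), rpow_def_of_pos (by positivity), ← exp_sub,
    log_div hr.ne' (by positivity), Psi]
  ring_nf

lemma sum_antidiagonalTuple_prod_poissonMassAtMean_le {q : ℝ} (hq : 2 < q) (n : ℕ) {r : ℕ}
    (hr : r ≠ 0) :
    ∑ z ∈ Nat.antidiagonalTuple n (n * r), ∏ i, poissonMassAtMean (z i) ≤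
      exp (n * ((1 - 1/q) * Psi r + (1/q) * log (1 + (2 * π) ^ (-q/2) * zetaReal (q/2)))) := by
  set c := (2 * π) ^ (-q/2) * zetaReal (q/2)
  have hc : 0 ≤ c := mul_nonneg (by positivity) (tsum_nonneg fun j => by positivity)
  set p := conjExponent q
  have hpq : p.HolderConjugate q := (HolderConjugate.conjExponent (by linarith)).symm
  have hp : p⁻¹ = 1 - 1/q := by rw [one_div, hpq.symm.one_sub_inv]
  set x : ℝ := r / (1 + r)
  have hr' : (0 : ℝ) < r := by positivity
  have hx0 : 0 < x := by positivity
  have hx1 : x < 1 := (div_lt_one (by positivity)).2 (by linarith)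
  have h1x : (1 - x)⁻¹ = 1 + r := by
    simp only [x]; field_simp; ring
  have hweights := sum_mul_rpow_pow_le hpq hx0.le hx1 poissonMassAtMean_nonneg (n * r + 1)
  rw [h1x] at hweights
  calc ∑ z ∈ Nat.antidiagonalTuple n (n * r), ∏ i, poissonMassAtMean (z i)
      ≤ (∑ m ∈ range (n * r + 1), poissonMassAtMean m * (x ^ p⁻¹) ^ m) ^ n /
          (x ^ p⁻¹) ^ (n * r) :=
        sum_antidiagonalTuple_prod_le poissonMassAtMean_nonneg (by positivity) n (n * r)
    _ ≤ ((1 + r) ^ p⁻¹ * (1 + c) ^ q⁻¹) ^ n / (x ^ p⁻¹) ^ (n * r) := by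
        gcongr
        · exact sum_nonneg fun m _ => mul_nonneg (poissonMassAtMean_nonneg m) (by positivity)
        refine hweights.trans ?_
        gcongr
        · exact sum_nonneg fun m _ => rpow_nonneg (poissonMassAtMean_nonneg m) q
        · exact sum_range_succ_poissonMassAtMean_rpow_le hq _
    _ = ((1 + r) ^ p⁻¹ / x ^ (p⁻¹ * r) * (1 + c) ^ q⁻¹) ^ n := by
        have hpow : (x ^ p⁻¹) ^ (n * r) = (x ^ (p⁻¹ * r)) ^ n := by
          rw [← rpow_natCast, ← rpow_mul hx0.le, ← rpow_natCast _ n, ← rpow_mul hx0.le]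
          push_cast
          ring_nf
        rw [hpow, ← div_pow]
        ring
    _ = exp (n * (p⁻¹ * Psi r + (1/q) * log (1 + c))) := by
        rw [rpow_div_rpow_eq_exp_mul_Psi hr', rpow_def_of_pos (by positivity), ← exp_add,
          ← exp_nat_mul]
        ring_nf
    _ = _ := by rw [hp]

lemma sum_antidiagonalTuple_prod_poissonMassAtMean_le_exp_Delta {n r : ℕ} (hn : n ≠ 0)
    (hr : r ≠ 0) :
    ∑ z ∈ Nat.antidiagonalTuple n (n * r), ∏ i, poissonMassAtMean (z i) ≤
      exp (n * Delta r) := by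
  refine le_exp_mul_sInf ?_ (by positivity) ?_
  · exact ⟨_, 3, by norm_num, rfl⟩
  rintro _ ⟨q, hq, rfl⟩
  exact sum_antidiagonalTuple_prod_poissonMassAtMean_le hq n hr

lemma exp_one_mul_sqrt_le_sqrt {x : ℝ} (hx : 0 ≤ x) :
    exp 1 * √x ≤ √(2 * π * exp 1 * x) := by
  calc exp 1 * √x = √(exp 1 * exp 1 * x) := by
        rw [sqrt_mul (by positivity), sqrt_mul_self (exp_pos 1).le]
    _ ≤ √(2 * π * exp 1 * x) := by
        gcongr
        linarith [exp_one_lt_d9, pi_gt_three]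

theorem stmt_17_general (n r : ℕ) (hn : 1 ≤ n) (hr : 1 ≤ r)
    (p : Fin n → ℝ) (hp : ∀ i, 0 < p i) (μ : ℝ) :
    ∑ z ∈ (Finset.Nat.antidiagonalTuple n (n * r)).filter
        (fun z => (Delta r + μ) / r ≤
          ∑ i, ((z i : ℝ) / (n * r)) * Real.log (((z i : ℝ) / (n * r)) / p i)),
        (((n * r).factorial : ℝ) / ∏ i, ((z i).factorial : ℝ)) * ∏ i, p i ^ z i
      ≤ Real.sqrt (2 * π * Real.exp 1 * (n * r)) * Real.exp (-(n * μ)) := by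
  have hn0 : n ≠ 0 := by omega
  have hr0 : r ≠ 0 := by omega
  have hN : n * r ≠ 0 := mul_ne_zero hn0 hr0
  have hNr : ((n * r : ℕ) : ℝ) = n * r := Nat.cast_mul n r
  set E := (Nat.antidiagonalTuple n (n * r)).filter fun z => (Delta r + μ) / r ≤
    ∑ i, ((z i : ℝ) / (n * r)) * log (((z i : ℝ) / (n * r)) / p i)
  set C := exp (-(n * (Delta r + μ))) * (exp 1 * √(n * r))
  calc _ ≤ ∑ z ∈ E, C * ∏ i, poissonMassAtMean (z i) := by
        refine sum_le_sum fun z hz => ?_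
        rw [mem_filter, Nat.mem_antidiagonalTuple] at hz
        have hexp : (n * r : ℝ) * ((Delta r + μ) / r) = n * (Delta r + μ) := by
          field_simp
        have h := multinomial_le_of_le_klDiv hN hz.1 hp (t := (Delta r + μ) / r)
          (by rw [hNr]; exact hz.2)
        rwa [hNr, hexp] at h
    _ ≤ C * ∑ z ∈ Nat.antidiagonalTuple n (n * r), ∏ i, poissonMassAtMean (z i) := by
        rw [mul_sum]
        exact sum_le_sum_of_subset_of_nonneg (filter_subset _ _) fun z _ _ =>
          mul_nonneg (by positivity) (prod_nonneg fun i _ => poissonMassAtMean_nonneg _)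
    _ ≤ C * exp (n * Delta r) := by
        gcongr
        exact sum_antidiagonalTuple_prod_poissonMassAtMean_le_exp_Delta hn0 hr0
    _ = exp 1 * √(n * r) * exp (-(n * μ)) := by
        rw [mul_right_comm, ← exp_add]
        ring_nf
    _ ≤ √(2 * π * exp 1 * (n * r)) * exp (-(n * μ)) := by
        gcongr
        exact exp_one_mul_sqrt_le_sqrt (by positivity)

theorem stmt_17 (n r : ℕ) (hn : 1 ≤ n) (hr : 1 ≤ r)
    (p : Fin n → ℝ) (hp : ∀ i, 0 < p i) (hps : ∑ i, p i = 1)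
    (μ : ℝ) (hμ : 0 < μ) :
    ∑ z ∈ (Finset.Nat.antidiagonalTuple n (n * r)).filter
        (fun z => (Delta r + μ) / r ≤
          ∑ i, ((z i : ℝ) / (n * r)) * Real.log (((z i : ℝ) / (n * r)) / p i)),
        (((n * r).factorial : ℝ) / ∏ i, ((z i).factorial : ℝ)) * ∏ i, p i ^ z i
      ≤ Real.sqrt (2 * π * Real.exp 1 * (n * r)) * Real.exp (-(n * μ)) :=
  stmt_17_general n r hn hr p hp μ
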